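/- There exists an absolute constant C > 0 such that for X ~ Poisson(λ) and real numbers b ≥ a ≥ 2, Var[X·√(min(X,a)·min(X,b))·1(X ≥ 4)] ≤ C·ab·E[X·√(min(X,a)·min(X,b))·1(X ≥ 4)]. -/

import Mathlib

open ProbabilityTheory
open scoped NNReal ENNReal

/-- Expectation of `f X` for `X ~ Poisson(r)`. -/
noncomputable def pev (r : ℝ≥0) (f : ℕ → ℝ) : ℝ :=
  ∑' x : ℕ, f x * poissonPMFReal r x

/-- Variance of `f X` for `X ~ Poisson(r)`. -/
noncomputable def pvar (r : ℝ≥0) (f : ℕ → ℝ) : ℝ :=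
  pev r (fun x => f x ^ 2) - (pev r f) ^ 2

/-- The function `x ↦ x √(min(x,a) min(x,b)) 1(x ≥ 4)`. -/
noncomputable def fab (a b : ℝ) (x : ℕ) : ℝ :=
  if 4 ≤ x then (x : ℝ) * Real.sqrt (min (x : ℝ) a * min (x : ℝ) b) else 0

set_option maxHeartbeats 1000000

section Basics

variable (r : ℝ≥0)

local notation "p" => poissonPMFReal r

lemma p_nonneg (n : ℕ) : 0 ≤ p n := poissonPMFReal_nonneg

lemma p_summable : Summable p := (poissonPMFRealSum r).summable

lemma p_tsum : ∑' n, p n = 1 := (poissonPMFRealSum r).tsum_eq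

/-- dominated summability: anything polynomially bounded times `p` is summable. -/
lemma summable_aux (A : ℝ) (j : ℕ) (q : ℕ → ℝ) (hq : ∀ n, |q n| ≤ A * (n : ℝ) ^ j) :
    Summable (fun n => q n * p n) := by
  have hA : 0 ≤ A := by
    have := hq 1
    simpa using (abs_nonneg (q 1)).trans this
  apply Summable.of_norm
  have hmaj : Summable (fun n : ℕ => A * Real.exp (-(r : ℝ)) * (((2 : ℝ) ^ j * r) ^ n / (n.factorial:ℝ))) :=
    (Real.summable_pow_div_factorial ((2 : ℝ) ^ j * r)).mul_left _
  refine hmaj.of_nonneg_of_le (fun n => norm_nonneg _) (fun n => ?_)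
  have hp : p n = Real.exp (-(r : ℝ)) * (r : ℝ) ^ n / (n.factorial:ℝ) := rfl
  have h1 : ‖q n * p n‖ = |q n| * p n := by
    rw [norm_mul, Real.norm_eq_abs, Real.norm_eq_abs, abs_of_nonneg (p_nonneg r n)]
  rw [h1]
  have h2 : |q n| * p n ≤ (A * (n : ℝ) ^ j) * p n :=
    mul_le_mul_of_nonneg_right (hq n) (p_nonneg r n)
  refine h2.trans ?_
  have hn2 : (n : ℝ) ^ j ≤ ((2 : ℝ) ^ j) ^ n := by
    have : (n : ℝ) ≤ (2 : ℝ) ^ n := by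
      exact_mod_cast (Nat.lt_two_pow_self (n := n)).le
    calc (n : ℝ) ^ j ≤ ((2 : ℝ) ^ n) ^ j := by
          exact pow_le_pow_left₀ (Nat.cast_nonneg n) this j
      _ = ((2 : ℝ) ^ j) ^ n := by rw [← pow_mul, ← pow_mul, Nat.mul_comm]
  have hfac : (0:ℝ) < (n.factorial:ℝ) := by exact_mod_cast Nat.factorial_pos n
  rw [hp]
  have expand : A * (n:ℝ)^j * (Real.exp (-(r:ℝ)) * (r:ℝ)^n / (n.factorial:ℝ))
      = (A * Real.exp (-(r:ℝ)) * (r:ℝ)^n / (n.factorial:ℝ)) * (n:ℝ)^j := by ring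
  have expand2 : A * Real.exp (-(r:ℝ)) * (((2:ℝ)^j * r)^n / (n.factorial:ℝ))
      = (A * Real.exp (-(r:ℝ)) * (r:ℝ)^n / (n.factorial:ℝ)) * ((2:ℝ)^j)^n := by
    rw [mul_pow]; ring
  rw [expand, expand2]
  exact mul_le_mul_of_nonneg_left hn2 (by positivity)

/-- shift identity : `r * p k = (k+1) * p (k+1)`. -/
lemma p_shift (k : ℕ) : (r : ℝ) * p k = ((k : ℝ) + 1) * p (k + 1) := by
  have hfac : ((k+1).factorial : ℝ) = ((k:ℝ)+1) * k.factorial := by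
    rw [Nat.factorial_succ]; push_cast; ring
  have hfp : (0:ℝ) < (k.factorial:ℝ) := by exact_mod_cast Nat.factorial_pos k
  simp only [poissonPMFReal, hfac, pow_succ]
  field_simp

/-- reindexing tails : `∑' n, ite (j ≤ n) (g n) 0 = ∑' n, g (n + j)` -/
lemma tsum_tail_reindex (g : ℕ → ℝ) (j : ℕ) :
    ∑' n, (if j ≤ n then g n else 0) = ∑' n, g (n + j) := by
  have hinj : Function.Injective (fun i : ℕ => i + j) := add_left_injective j
  have := hinj.tsum_eq (f := fun n => if j ≤ n then g n else 0) ?_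
  · rw [← this]
    congr 1; funext i
    simp [Nat.le_add_left]
  · intro x hx
    simp only [Function.mem_support, ne_eq, ite_eq_right_iff, not_forall] at hx
    obtain ⟨hjx, -⟩ := hx
    exact ⟨x - j, by show x - j + j = x; omega⟩

end Basics

section FabProps

variable {a b : ℝ}

lemma fab_zero {x : ℕ} (hx : x ≤ 3) : fab a b x = 0 := by
  simp [fab, Nat.not_le.mpr (by omega : x < 4)]

lemma fab_nonneg (x : ℕ) : 0 ≤ fab a b x := by
  unfold fab
  split
  · exact mul_nonneg (Nat.cast_nonneg x) (Real.sqrt_nonneg _)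
  · exact le_refl 0

lemma g_le_ab (h2a : 2 ≤ a) (hab : a ≤ b) {x : ℕ} :
    min (x:ℝ) a * min (x:ℝ) b ≤ a * b := by
  apply mul_le_mul (min_le_right _ _) (min_le_right _ _)
  · exact le_min (Nat.cast_nonneg x) (by linarith)
  · linarith

lemma sqrtg_le (h2a : 2 ≤ a) (hab : a ≤ b) {x : ℕ} :
    Real.sqrt (min (x:ℝ) a * min (x:ℝ) b) ≤ Real.sqrt (a*b) :=
  Real.sqrt_le_sqrt (g_le_ab h2a hab)

lemma fab_le (h2a : 2 ≤ a) (hab : a ≤ b) (x : ℕ) : fab a b x ≤ Real.sqrt (a*b) * x := by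
  unfold fab
  split
  · rw [mul_comm (Real.sqrt (a*b)) (x:ℝ)]
    exact mul_le_mul_of_nonneg_left (sqrtg_le h2a hab) (Nat.cast_nonneg x)
  · positivity

lemma fab_ge (h2a : 2 ≤ a) (hab : a ≤ b) {x : ℕ} (hx : 4 ≤ x) : 2 * (x:ℝ) ≤ fab a b x := by
  have hx' : (4:ℝ) ≤ (x:ℝ) := by exact_mod_cast hx
  rw [fab, if_pos hx, mul_comm (x:ℝ)]
  apply mul_le_mul_of_nonneg_right _ (Nat.cast_nonneg x)
  rw [show (2:ℝ) = Real.sqrt 4 by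
    rw [show (4:ℝ) = 2*2 by norm_num, Real.sqrt_mul_self (by norm_num)]]
  apply Real.sqrt_le_sqrt
  have h1 : (2:ℝ) ≤ min (x:ℝ) a := le_min (by linarith) h2a
  have h2 : (2:ℝ) ≤ min (x:ℝ) b := le_min (by linarith) (by linarith)
  nlinarith

lemma g_mono (h2a : 2 ≤ a) (hab : a ≤ b) {x : ℕ} :
    min (x:ℝ) a * min (x:ℝ) b ≤ min ((x:ℝ)+1) a * min ((x:ℝ)+1) b := by
  have c0 : (0:ℝ) ≤ (x:ℝ) := Nat.cast_nonneg x
  apply mul_le_mul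
  · exact min_le_min (by linarith) le_rfl
  · exact min_le_min (by linarith) le_rfl
  · exact le_min c0 (by linarith)
  · exact le_min (by linarith) (by linarith)

lemma fab_succ_le (h2a : 2 ≤ a) (hab : a ≤ b) (k : ℕ) :
    fab a b (k+1) ≤ fab a b k + 4 * Real.sqrt (a*b) := by
  have hs0 : (0:ℝ) ≤ Real.sqrt (a*b) := Real.sqrt_nonneg _
  rcases Nat.lt_or_ge k 3 with hk | hk
  · rw [fab_zero (by omega), fab_zero (by omega)]
    linarith
  rcases Nat.eq_or_lt_of_le hk with hk3 | hk4
  · -- k = 3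
    obtain rfl : k = 3 := hk3.symm
    rw [fab_zero (by omega : (3:ℕ) ≤ 3)]
    have h4 : fab a b 4 ≤ Real.sqrt (a*b) * ((4:ℕ):ℝ) := fab_le h2a hab 4
    norm_num at h4
    linarith
  · -- k ≥ 4
    have hk4' : 4 ≤ k := hk4
    set x : ℝ := (k:ℝ) with hxdef
    have hx4 : (4:ℝ) ≤ x := by rw [hxdef]; exact_mod_cast hk4'
    have hx0 : (0:ℝ) < x := by linarith
    have key : ∀ c : ℝ, 0 ≤ c → min (x+1) c ≤ (1+1/x) * min x c := by
      intro c hc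
      rcases le_total c x with h | h
      · rw [min_eq_right h, min_eq_right (by linarith)]
        nlinarith [one_div_nonneg.mpr hx0.le]
      · rw [min_eq_left h]
        calc min (x+1) c ≤ x + 1 := min_le_left _ _
          _ = (1+1/x) * x := by field_simp
    set g : ℝ := min x a * min x b with hgdef
    have hg0 : 0 ≤ g := by
      rw [hgdef]
      exact mul_nonneg (le_min hx0.le (by linarith)) (le_min hx0.le (by linarith))
    have hgab : Real.sqrt g ≤ Real.sqrt (a*b) := sqrtg_le h2a hab
    have hg1 : min (x+1) a * min (x+1) b ≤ ((1+1/x) * min x a) * ((1+1/x) * min x b) := by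
      apply mul_le_mul (key a (by linarith)) (key b (by linarith))
        (le_min (by linarith) (by linarith))
      have : (0:ℝ) ≤ min x a := le_min hx0.le (by linarith)
      positivity
    have hg2 : ((1+1/x) * min x a) * ((1+1/x) * min x b) = ((1+1/x))^2 * g := by
      rw [hgdef]; ring
    have hsq : Real.sqrt (min (x+1) a * min (x+1) b) ≤ (1+1/x) * Real.sqrt g := by
      have h1x : (0:ℝ) ≤ 1 + 1/x := by positivity
      calc Real.sqrt (min (x+1) a * min (x+1) b) ≤ Real.sqrt ((1+1/x)^2 * g) := by
            apply Real.sqrt_le_sqrt; rw [← hg2]; exact hg1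
        _ = (1+1/x) * Real.sqrt g := by
            rw [Real.sqrt_mul (by positivity), Real.sqrt_sq h1x]
    have hcast : ((k+1 : ℕ) : ℝ) = x + 1 := by rw [hxdef]; push_cast; ring
    rw [fab, fab, if_pos (by omega : 4 ≤ k + 1), if_pos hk4']
    rw [hcast, ← hxdef, ← hgdef]
    calc (x+1) * Real.sqrt (min (x+1) a * min (x+1) b)
        ≤ (x+1) * ((1+1/x) * Real.sqrt g) := by
          apply mul_le_mul_of_nonneg_left hsq (by linarith)
      _ = x * Real.sqrt g + (2 + 1/x) * Real.sqrt g := by field_simp; ring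
      _ ≤ x * Real.sqrt g + 4 * Real.sqrt (a*b) := by
          have h1x : 1/x ≤ 1 := by rw [div_le_one hx0]; linarith
          have : (2 + 1/x) * Real.sqrt g ≤ 3 * Real.sqrt (a*b) := by
            nlinarith [Real.sqrt_nonneg g]
          linarith

lemma fab_mono (h2a : 2 ≤ a) (hab : a ≤ b) : Monotone (fab a b) := by
  apply monotone_nat_of_le_succ
  intro k
  rcases Nat.lt_or_ge k 4 with hk | hk
  · rw [fab_zero (by omega)]
    exact fab_nonneg (k+1)
  · rw [fab, fab, if_pos (by omega : 4 ≤ k + 1), if_pos hk]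
    have hcast : ((k+1 : ℕ) : ℝ) = (k:ℝ) + 1 := by push_cast; ring
    rw [hcast]
    have c0 : (0:ℝ) ≤ (k:ℝ) := Nat.cast_nonneg k
    apply mul_le_mul (by linarith) (Real.sqrt_le_sqrt (g_mono h2a hab)) (Real.sqrt_nonneg _)
      (by linarith)

end FabProps

section Main

variable (r : ℝ≥0)

local notation "p" => poissonPMFReal r

/-- Sums of the form `ite * p` are summable. -/
lemma summable_ite_p (c : ℕ → Prop) [DecidablePred c] :
    Summable (fun n => if c n then p n else 0) := by
  have : (fun n => if c n then p n else 0) = fun n => (if c n then (1:ℝ) else 0) * p n := by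
    funext n; split <;> simp
  rw [this]
  apply summable_aux r 1 0 _
  intro n; split <;> simp

lemma summable_ite_np (c : ℕ → Prop) [DecidablePred c] :
    Summable (fun n => if c n then (n : ℝ) * p n else 0) := by
  have : (fun n => if c n then (n:ℝ) * p n else 0)
      = fun n => (if c n then (n:ℝ) else 0) * p n := by
    funext n; split <;> simp
  rw [this]
  apply summable_aux r 1 1 _
  intro n; split
  · rw [abs_of_nonneg (Nat.cast_nonneg n)]; simp
  · simp

lemma tail_eq (j : ℕ) :
    ∑' n, (if j ≤ n then p n else 0) = 1 - ∑ m ∈ Finset.range j, p m := by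
  rw [tsum_tail_reindex]
  have h := Summable.sum_add_tsum_nat_add (f := p) j (p_summable r)
  rw [p_tsum r] at h
  linarith

lemma tailN_eq (k : ℕ) :
    ∑' n, (if k < n then ((n:ℝ) * p n) else 0)
      = r * (1 - ∑ m ∈ Finset.range k, p m) := by
  have h1 : ∀ n, (if k < n then ((n:ℝ) * p n) else 0)
      = (if k + 1 ≤ n then ((n:ℝ) * p n) else 0) := by
    intro n; apply if_congr (by omega) rfl rfl
  rw [tsum_congr h1, tsum_tail_reindex]
  have h2 : ∀ n : ℕ, ((n + (k+1) : ℕ) : ℝ) * p (n + (k + 1)) = r * p (n + k) := by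
    intro n
    have := p_shift r (n + k)
    rw [show n + (k+1) = (n + k) + 1 from rfl]
    push_cast at this ⊢
    linarith
  rw [tsum_congr h2, tsum_mul_left]
  congr 1
  have h := Summable.sum_add_tsum_nat_add (f := p) k (p_summable r)
  rw [p_tsum r] at h
  linarith

lemma A_eq (k : ℕ) :
    ∑' n, (if k < n then (p n * ((n:ℝ) - ((k:ℝ)+1))) else 0)
      = r * (1 - ∑ m ∈ Finset.range k, p m)
        - ((k:ℝ)+1) * (1 - ∑ m ∈ Finset.range (k+1), p m) := by
  have hsplit : ∀ n, (if k < n then (p n * ((n:ℝ) - ((k:ℝ)+1))) else 0)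
      = (if k < n then ((n:ℝ) * p n) else 0)
        - ((k:ℝ)+1) * (if k < n then (p n) else 0) := by
    intro n; split
    · ring
    · ring
  rw [tsum_congr hsplit,
    Summable.tsum_sub (summable_ite_np r _) ((summable_ite_p r _).mul_left _),
    tsum_mul_left, tailN_eq r k]
  congr 2
  have : ∀ n, (if k < n then p n else 0) = (if k + 1 ≤ n then p n else 0) := by
    intro n; apply if_congr (by omega) rfl rfl
  rw [tsum_congr this, tail_eq r (k+1)]

lemma B2_eq (k : ℕ) :
    ∑ m ∈ Finset.range (k+1), (((k:ℝ) + 1 - (m:ℝ)) * p m)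
      = ((k:ℝ)+1) * (∑ m ∈ Finset.range (k+1), p m)
        - r * ∑ m ∈ Finset.range k, p m := by
  have h1 : ∑ m ∈ Finset.range (k+1), (((k:ℝ) + 1 - (m:ℝ)) * p m)
      = ∑ m ∈ Finset.range (k+1), (((k:ℝ)+1) * p m - (m:ℝ) * p m) := by
    apply Finset.sum_congr rfl; intros; ring
  rw [h1, Finset.sum_sub_distrib, ← Finset.mul_sum]
  congr 1
  rw [Finset.sum_range_succ' (fun m => (m:ℝ) * p m) k]
  simp only [Nat.cast_zero, zero_mul, add_zero]
  rw [Finset.mul_sum]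
  apply Finset.sum_congr rfl
  intro m _
  have := p_shift r m
  push_cast at this ⊢
  linarith

/-- The crucial identity `w_k = r * p k`. -/
lemma wk_eq (k : ℕ) :
    (∑' n, (if k < n then (p n * ((n:ℝ) - ((k:ℝ)+1))) else 0))
        * (∑ m ∈ Finset.range (k+1), p m)
      + (∑' n, (if k < n then p n else 0))
        * (∑ m ∈ Finset.range (k+1), (((k:ℝ) + 1 - (m:ℝ)) * p m))
      = r * p k := by
  have hG : ∑' n, (if k < n then p n else 0)
      = 1 - ∑ m ∈ Finset.range (k+1), p m := by
    have : ∀ n, (if k < n then p n else 0) = (if k + 1 ≤ n then p n else 0) := by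
      intro n; apply if_congr (by omega) rfl rfl
    rw [tsum_congr this, tail_eq r (k+1)]
  rw [A_eq r k, B2_eq r k, hG]
  have hFs : ∑ m ∈ Finset.range (k+1), p m = (∑ m ∈ Finset.range k, p m) + p k :=
    Finset.sum_range_succ _ k
  rw [hFs]
  ring


lemma step3 (f : ℕ → ℝ) (M A : ℝ) (hmono : Monotone f) (h03 : ∀ x, x ≤ 3 → f x = 0)
    (hd : ∀ k, f (k+1) - f k ≤ M) (hA : ∀ n, |f n| ≤ A * (n:ℝ)) :
    ∑' nm : ℕ × ℕ, (if nm.2 < nm.1 then p nm.1 * p nm.2 * (f nm.1 - f nm.2)^2 else 0)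
      ≤ M^2 * ((r:ℝ) * ∑' k, (if 3 ≤ k then p k else 0)) := by
  classical
  set d : ℕ → ℝ := fun k => f (k+1) - f k with hddef
  have hd0 : ∀ k, 0 ≤ d k := fun k => sub_nonneg.mpr (hmono (Nat.le_succ k))
  have hM0 : 0 ≤ M := (hd 0).trans' (by rw [h03 1 (by omega), h03 0 (by omega)]; norm_num)
  have hf0 : ∀ n, 0 ≤ f n := fun n => by
    have := hmono (Nat.zero_le n); rwa [h03 0 (by omega)] at this
  set G : ℕ × ℕ → ℝ :=
    fun nm => if nm.2 < nm.1 then p nm.1 * p nm.2 * (f nm.1 - f nm.2)^2 else 0 with hGdef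
  have hG0 : ∀ nm, 0 ≤ G nm := by
    intro nm; rw [hGdef]; dsimp only; split
    · exact mul_nonneg (mul_nonneg (p_nonneg r _) (p_nonneg r _)) (sq_nonneg _)
    · exact le_refl 0
  -- Summability of G
  have hSf : Summable (fun n => f n * p n) := summable_aux r A 1 f (by simpa using hA)
  have hSf2 : Summable (fun n => f n ^ 2 * p n) := by
    apply summable_aux r (A^2) 2 _
    intro n
    rw [abs_pow, ← mul_pow]
    exact pow_le_pow_left₀ (abs_nonneg _) (hA n) 2
  have hf2p0 : ∀ n, 0 ≤ f n ^ 2 * p n := fun n => mul_nonneg (sq_nonneg _) (p_nonneg r n)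
  have hGS : Summable G := by
    have hmaj : Summable (fun nm : ℕ × ℕ =>
        2 * ((f nm.1 ^ 2 * p nm.1) * p nm.2) + 2 * (p nm.1 * (f nm.2 ^ 2 * p nm.2))) :=
      ((hSf2.mul_of_nonneg (p_summable r) hf2p0 (p_nonneg r)).mul_left 2).add
        (((p_summable r).mul_of_nonneg hSf2 (p_nonneg r) hf2p0).mul_left 2)
    apply hmaj.of_nonneg_of_le hG0
    intro nm
    rw [hGdef]; dsimp only
    have hpp : 0 ≤ p nm.1 * p nm.2 := mul_nonneg (p_nonneg r _) (p_nonneg r _)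
    split
    · nlinarith [sq_nonneg (f nm.1 + f nm.2), sq_nonneg (f nm.1 - f nm.2),
        mul_nonneg hpp (sq_nonneg (f nm.1 + f nm.2))]
    · nlinarith [mul_nonneg hpp (sq_nonneg (f nm.1 + f nm.2)),
        mul_nonneg hpp (sq_nonneg (f nm.1 - f nm.2))]
  -- ENNReal machinery
  set D : ℕ → ℝ≥0∞ := fun k => ENNReal.ofReal (d k ^ 2) with hDdef
  set a1 : ℕ → ℕ → ℝ := fun k n => if k < n then p n * ((n:ℝ) - ((k:ℝ)+1)) else 0 with ha1
  set b1 : ℕ → ℕ → ℝ := fun k m => if m ≤ k then p m else 0 with hb1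
  set a2 : ℕ → ℕ → ℝ := fun k n => if k < n then p n else 0 with ha2
  set b2 : ℕ → ℕ → ℝ := fun k m => if m ≤ k then (((k:ℝ) + 1 - (m:ℝ)) * p m) else 0 with hb2
  set Φ : ℕ → ℕ → ℕ → ℝ≥0∞ := fun k n m =>
    (ENNReal.ofReal (a1 k n) * ENNReal.ofReal (b1 k m)
      + ENNReal.ofReal (a2 k n) * ENNReal.ofReal (b2 k m)) * D k with hΦ
  set J : ℕ × ℕ → ℝ≥0∞ := fun nm => ∑' k, Φ k nm.1 nm.2 with hJ
  -- Step I : pointwise bound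
  have hGJ : ∀ nm : ℕ × ℕ, ENNReal.ofReal (G nm) ≤ J nm := by
    rintro ⟨n, m⟩
    rw [hGdef]; dsimp only
    split
    case isFalse h => simp
    case isTrue h =>
      -- telescoping
      have htel : f n - f m = ∑ k ∈ Finset.Ico m n, d k := by
        rw [Finset.sum_Ico_eq_sub _ h.le, Finset.sum_range_sub f, Finset.sum_range_sub f,
          h03 0 (by omega)]
        ring
      have hCS : (f n - f m)^2 ≤ ((n - m : ℕ):ℝ) * ∑ k ∈ Finset.Ico m n, d k ^ 2 := by
        have := Finset.sum_mul_sq_le_sq_mul_sq (Finset.Ico m n) (fun _ => (1:ℝ)) d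
        simp only [one_mul, one_pow, Finset.sum_const, nsmul_eq_mul, mul_one] at this
        rw [htel]
        calc (∑ k ∈ Finset.Ico m n, d k) ^ 2
            ≤ ((Finset.Ico m n).card : ℝ) * ∑ k ∈ Finset.Ico m n, d k ^ 2 := this
          _ = ((n - m : ℕ):ℝ) * ∑ k ∈ Finset.Ico m n, d k ^ 2 := by
              rw [Nat.card_Ico]
      -- term equality on Ico
      have hterm : ∀ k ∈ Finset.Ico m n,
          ENNReal.ofReal (p n * p m * ((n - m : ℕ):ℝ) * d k ^ 2) = Φ k n m := by
        intro k hk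
        rw [Finset.mem_Ico] at hk
        obtain ⟨hmk, hkn⟩ := hk
        have hkn' : ((k:ℝ)+1) ≤ (n:ℝ) := by exact_mod_cast hkn
        have hmk' : (m:ℝ) ≤ (k:ℝ) := by exact_mod_cast hmk
        have hna1 : 0 ≤ a1 k n := by
          rw [ha1]; dsimp only; rw [if_pos hkn]
          exact mul_nonneg (p_nonneg r n) (by linarith)
        have hna2 : 0 ≤ a2 k n := by
          rw [ha2]; dsimp only; rw [if_pos hkn]; exact p_nonneg r n
        have hnb1 : 0 ≤ b1 k m := by
          rw [hb1]; dsimp only; rw [if_pos hmk]; exact p_nonneg r m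
        have hnb2 : 0 ≤ b2 k m := by
          rw [hb2]; dsimp only; rw [if_pos hmk]
          exact mul_nonneg (by linarith) (p_nonneg r m)
        have hreal : a1 k n * b1 k m + a2 k n * b2 k m = p n * p m * ((n - m : ℕ):ℝ) := by
          rw [ha1, hb1, ha2, hb2]; dsimp only
          rw [if_pos hkn, if_pos hmk, if_pos hkn, if_pos hmk, Nat.cast_sub (by omega : m ≤ n)]
          ring
        have hΦeq : Φ k n m = ENNReal.ofReal ((p n * p m * ((n - m : ℕ):ℝ)) * d k ^ 2) := by
          rw [hΦ]; dsimp only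
          rw [← ENNReal.ofReal_mul hna1, ← ENNReal.ofReal_mul hna2,
            ← ENNReal.ofReal_add (mul_nonneg hna1 hnb1) (mul_nonneg hna2 hnb2), hDdef]
          dsimp only
          rw [← ENNReal.ofReal_mul (by rw [hreal]; exact mul_nonneg (mul_nonneg (p_nonneg r n) (p_nonneg r m)) (Nat.cast_nonneg _)), hreal]
        rw [hΦeq, mul_assoc]
      have hpp : 0 ≤ p n * p m := mul_nonneg (p_nonneg r n) (p_nonneg r m)
      calc ENNReal.ofReal (p n * p m * (f n - f m)^2)
          ≤ ENNReal.ofReal (p n * p m * (((n - m : ℕ):ℝ) * ∑ k ∈ Finset.Ico m n, d k ^ 2)) :=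
            ENNReal.ofReal_le_ofReal (mul_le_mul_of_nonneg_left hCS hpp)
        _ = ENNReal.ofReal (∑ k ∈ Finset.Ico m n, p n * p m * ((n - m : ℕ):ℝ) * d k ^ 2) := by
            rw [← mul_assoc, Finset.mul_sum]
        _ = ∑ k ∈ Finset.Ico m n, ENNReal.ofReal (p n * p m * ((n - m : ℕ):ℝ) * d k ^ 2) :=
            ENNReal.ofReal_sum_of_nonneg (fun k _ => by positivity)
        _ = ∑ k ∈ Finset.Ico m n, Φ k n m := Finset.sum_congr rfl hterm
        _ ≤ ∑' k, Φ k n m := ENNReal.sum_le_tsum _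
        _ = J (n, m) := by rw [hJ]
  -- Step II : compute the rearranged sum
  have ha1nn : ∀ k n, 0 ≤ a1 k n := by
    intro k n; rw [ha1]; dsimp only; split
    · rename_i hkn
      have : ((k:ℝ)+1) ≤ (n:ℝ) := by exact_mod_cast hkn
      exact mul_nonneg (p_nonneg r n) (by linarith)
    · exact le_refl 0
  have ha2nn : ∀ k n, 0 ≤ a2 k n := by
    intro k n; rw [ha2]; dsimp only; split
    · exact p_nonneg r n
    · exact le_refl 0
  have ha1S : ∀ k, Summable (a1 k) := by
    intro k
    have : a1 k = fun n => (if k < n then ((n:ℝ) - ((k:ℝ)+1)) else 0) * p n := by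
      funext n; rw [ha1]; dsimp only; split
      · ring
      · simp
    rw [this]
    apply summable_aux r 1 1
    intro n; split
    · rename_i hkn
      have h1 : ((k:ℝ)+1) ≤ (n:ℝ) := by exact_mod_cast hkn
      rw [abs_of_nonneg (by linarith)]
      simp only [pow_one, one_mul]
      linarith
    · simp
  have ha2S : ∀ k, Summable (a2 k) := by
    intro k; rw [ha2]; exact summable_ite_p r _
  have hU1 : ∀ k, ∑' n, ENNReal.ofReal (a1 k n) = ENNReal.ofReal (∑' n, a1 k n) := fun k =>
    (ENNReal.ofReal_tsum_of_nonneg (ha1nn k) (ha1S k)).symm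
  have hU2 : ∀ k, ∑' n, ENNReal.ofReal (a2 k n) = ENNReal.ofReal (∑' n, a2 k n) := fun k =>
    (ENNReal.ofReal_tsum_of_nonneg (ha2nn k) (ha2S k)).symm
  have hV1 : ∀ k, ∑' m, ENNReal.ofReal (b1 k m)
      = ENNReal.ofReal (∑ m ∈ Finset.range (k+1), p m) := by
    intro k
    rw [tsum_eq_sum (s := Finset.range (k+1)) (fun m hm => by
      rw [hb1]; dsimp only
      rw [if_neg (by rw [Finset.mem_range] at hm; omega)]
      simp)]
    rw [ENNReal.ofReal_sum_of_nonneg (fun m _ => p_nonneg r m)]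
    apply Finset.sum_congr rfl
    intro m hm
    rw [hb1]; dsimp only
    rw [if_pos (by simpa [Nat.lt_succ_iff] using Finset.mem_range.mp hm)]
  have hV2 : ∀ k, ∑' m, ENNReal.ofReal (b2 k m)
      = ENNReal.ofReal (∑ m ∈ Finset.range (k+1), (((k:ℝ) + 1 - (m:ℝ)) * p m)) := by
    intro k
    rw [tsum_eq_sum (s := Finset.range (k+1)) (fun m hm => by
      rw [hb2]; dsimp only
      rw [if_neg (by rw [Finset.mem_range] at hm; omega)]
      simp)]
    rw [ENNReal.ofReal_sum_of_nonneg (fun m hm => by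
      have : (m:ℝ) ≤ (k:ℝ) := by
        exact_mod_cast Nat.lt_succ_iff.mp (Finset.mem_range.mp hm)
      exact mul_nonneg (by linarith) (p_nonneg r m))]
    apply Finset.sum_congr rfl
    intro m hm
    rw [hb2]; dsimp only
    rw [if_pos (by simpa [Nat.lt_succ_iff] using Finset.mem_range.mp hm)]
  have hJsum : ∑' nm : ℕ × ℕ, J nm = ∑' k, ENNReal.ofReal ((r:ℝ) * p k) * D k := by
    rw [ENNReal.tsum_prod']
    have e1 : ∀ n, ∑' (m : ℕ), J (n, m) = ∑' (k : ℕ) (m : ℕ), Φ k n m := by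
      intro n; rw [hJ]; dsimp only; exact ENNReal.tsum_comm
    calc ∑' (n : ℕ) (m : ℕ), J (n, m)
        = ∑' (n : ℕ) (k : ℕ) (m : ℕ), Φ k n m := tsum_congr e1
      _ = ∑' (k : ℕ) (n : ℕ) (m : ℕ), Φ k n m := ENNReal.tsum_comm
      _ = ∑' k, ENNReal.ofReal ((r:ℝ) * p k) * D k := by
          apply tsum_congr
          intro k
          have e2 : ∀ n, ∑' m, Φ k n m
              = ENNReal.ofReal (a1 k n) * (ENNReal.ofReal (∑ m ∈ Finset.range (k+1), p m) * D k)
                + ENNReal.ofReal (a2 k n) * (ENNReal.ofReal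
                    (∑ m ∈ Finset.range (k+1), (((k:ℝ) + 1 - (m:ℝ)) * p m)) * D k) := by
            intro n
            have : ∀ m, Φ k n m
                = ENNReal.ofReal (a1 k n) * D k * ENNReal.ofReal (b1 k m)
                  + ENNReal.ofReal (a2 k n) * D k * ENNReal.ofReal (b2 k m) := by
              intro m; rw [hΦ]; dsimp only; ring
            rw [tsum_congr this, ENNReal.tsum_add, ENNReal.tsum_mul_left,
              ENNReal.tsum_mul_left, hV1 k, hV2 k]
            ring
          rw [tsum_congr e2, ENNReal.tsum_add, ENNReal.tsum_mul_right,
            ENNReal.tsum_mul_right, hU1 k, hU2 k]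
          have hAnn : 0 ≤ ∑' n, a1 k n := tsum_nonneg (ha1nn k)
          have hGnn : 0 ≤ ∑' n, a2 k n := tsum_nonneg (ha2nn k)
          have hFnn : 0 ≤ ∑ m ∈ Finset.range (k+1), p m :=
            Finset.sum_nonneg (fun m _ => p_nonneg r m)
          have hB2nn : 0 ≤ ∑ m ∈ Finset.range (k+1), (((k:ℝ) + 1 - (m:ℝ)) * p m) := by
            apply Finset.sum_nonneg
            intro m hm
            have : (m:ℝ) ≤ (k:ℝ) := by
              exact_mod_cast Nat.lt_succ_iff.mp (Finset.mem_range.mp hm)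
            exact mul_nonneg (by linarith) (p_nonneg r m)
          calc ENNReal.ofReal (∑' n, a1 k n)
                  * (ENNReal.ofReal (∑ m ∈ Finset.range (k+1), p m) * D k)
                + ENNReal.ofReal (∑' n, a2 k n) * (ENNReal.ofReal
                    (∑ m ∈ Finset.range (k+1), (((k:ℝ) + 1 - (m:ℝ)) * p m)) * D k)
              = (ENNReal.ofReal (∑' n, a1 k n)
                  * ENNReal.ofReal (∑ m ∈ Finset.range (k+1), p m)
                + ENNReal.ofReal (∑' n, a2 k n) * ENNReal.ofReal
                    (∑ m ∈ Finset.range (k+1), (((k:ℝ) + 1 - (m:ℝ)) * p m))) * D k := by ring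
            _ = ENNReal.ofReal ((r:ℝ) * p k) * D k := by
                congr 1
                rw [← ENNReal.ofReal_mul hAnn, ← ENNReal.ofReal_mul hGnn,
                  ← ENNReal.ofReal_add (mul_nonneg hAnn hFnn) (mul_nonneg hGnn hB2nn)]
                congr 1
                have := wk_eq r k
                rw [ha1, ha2]
                exact this
  -- Step III : final bound
  have hIII : ∑' k, ENNReal.ofReal ((r:ℝ) * p k) * D k
      ≤ ENNReal.ofReal (M^2 * ((r:ℝ) * ∑' j, (if 3 ≤ j then p j else 0))) := by
    set t : ℕ → ℝ := fun k => if 3 ≤ k then (M^2 * (r:ℝ)) * p k else 0 with htdef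
    have hrp : ∀ k, 0 ≤ (r:ℝ) * p k := fun k => mul_nonneg r.coe_nonneg (p_nonneg r k)
    have ht : ∀ k, ENNReal.ofReal ((r:ℝ) * p k) * D k ≤ ENNReal.ofReal (t k) := by
      intro k
      by_cases hk : 3 ≤ k
      · have hdM : d k ≤ M := hd k
        have hdk : d k ^ 2 ≤ M ^ 2 := by nlinarith [hd0 k, sq_nonneg (M - d k)]
        calc ENNReal.ofReal ((r:ℝ) * p k) * D k
            ≤ ENNReal.ofReal ((r:ℝ) * p k) * ENNReal.ofReal (M^2) := by
              rw [hDdef]; exact mul_le_mul_right (ENNReal.ofReal_le_ofReal hdk) _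
          _ = ENNReal.ofReal (((r:ℝ) * p k) * M^2) := (ENNReal.ofReal_mul (hrp k)).symm
          _ = ENNReal.ofReal (t k) := by rw [htdef]; dsimp only; rw [if_pos hk]; congr 1; ring
      · have hdk : d k = 0 := by
          rw [hddef]; dsimp only; rw [h03 (k+1) (by omega), h03 k (by omega)]; ring
        rw [hDdef]; dsimp only; rw [hdk]
        simp
    have htnn : ∀ k, 0 ≤ t k := by
      intro k; rw [htdef]; dsimp only; split
      · exact mul_nonneg (mul_nonneg (sq_nonneg M) r.coe_nonneg) (p_nonneg r k)
      · exact le_refl 0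
    have htS : Summable t := by
      have : t = fun k => (if 3 ≤ k then (M^2 * (r:ℝ)) else 0) * p k := by
        funext k; rw [htdef]; dsimp only; split
        · ring
        · simp
      rw [this]
      apply summable_aux r (M^2 * (r:ℝ)) 0
      intro n; split
      · rw [abs_of_nonneg (mul_nonneg (sq_nonneg M) r.coe_nonneg)]; simp
      · simp
        positivity
    calc ∑' k, ENNReal.ofReal ((r:ℝ) * p k) * D k
        ≤ ∑' k, ENNReal.ofReal (t k) := ENNReal.tsum_le_tsum ht
      _ = ENNReal.ofReal (∑' k, t k) := (ENNReal.ofReal_tsum_of_nonneg htnn htS).symm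
      _ = ENNReal.ofReal (M^2 * ((r:ℝ) * ∑' j, (if 3 ≤ j then p j else 0))) := by
          congr 1
          have : ∀ k, t k = (M^2 * (r:ℝ)) * (if 3 ≤ k then p k else 0) := by
            intro k; rw [htdef]; dsimp only; split
            · rfl
            · simp
          rw [tsum_congr this, tsum_mul_left]
          ring
  -- Assemble
  have hRHS0 : 0 ≤ M^2 * ((r:ℝ) * ∑' j, (if 3 ≤ j then p j else 0)) := by
    apply mul_nonneg (sq_nonneg M)
    apply mul_nonneg r.coe_nonneg
    apply tsum_nonneg
    intro j; split
    · exact p_nonneg r j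
    · exact le_refl 0
  have hchain : ENNReal.ofReal (∑' nm, G nm)
      ≤ ENNReal.ofReal (M^2 * ((r:ℝ) * ∑' j, (if 3 ≤ j then p j else 0))) := by
    rw [ENNReal.ofReal_tsum_of_nonneg hG0 hGS]
    calc ∑' nm, ENNReal.ofReal (G nm) ≤ ∑' nm, J nm := ENNReal.tsum_le_tsum hGJ
      _ = ∑' k, ENNReal.ofReal ((r:ℝ) * p k) * D k := hJsum
      _ ≤ _ := hIII
  exact (ENNReal.ofReal_le_ofReal_iff hRHS0).mp hchain


/-- The double sum representation of variance. -/
lemma var_rep (f : ℕ → ℝ) (A : ℝ) (hf0 : ∀ n, 0 ≤ f n) (hA : ∀ n, |f n| ≤ A * n) :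
    pvar r f = ∑' nm : ℕ × ℕ,
      (if nm.2 < nm.1 then p nm.1 * p nm.2 * (f nm.1 - f nm.2)^2 else 0) := by
  classical
  set F : ℕ × ℕ → ℝ := fun nm => p nm.1 * p nm.2 * (f nm.1 - f nm.2)^2 with hF
  set G : ℕ × ℕ → ℝ := fun nm => if nm.2 < nm.1 then F nm else 0 with hG
  have hSf : Summable (fun n => f n * p n) := summable_aux r A 1 f (by simpa using hA)
  have hSf2 : Summable (fun n => f n ^ 2 * p n) := by
    apply summable_aux r (A^2) 2 _
    intro n
    rw [abs_pow, ← mul_pow]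
    exact pow_le_pow_left₀ (abs_nonneg _) (hA n) 2
  have hfp0 : ∀ n, 0 ≤ f n * p n := fun n => mul_nonneg (hf0 n) (p_nonneg r n)
  have hf2p0 : ∀ n, 0 ≤ f n ^ 2 * p n := fun n => mul_nonneg (sq_nonneg _) (p_nonneg r n)
  -- the three product summables
  have h1 : Summable (fun nm : ℕ × ℕ => (f nm.1 ^ 2 * p nm.1) * p nm.2) :=
    hSf2.mul_of_nonneg (p_summable r) hf2p0 (p_nonneg r)
  have h2 : Summable (fun nm : ℕ × ℕ => (f nm.1 * p nm.1) * (f nm.2 * p nm.2)) :=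
    hSf.mul_of_nonneg hSf hfp0 hfp0
  have h3 : Summable (fun nm : ℕ × ℕ => p nm.1 * (f nm.2 ^ 2 * p nm.2)) :=
    (p_summable r).mul_of_nonneg hSf2 (p_nonneg r) hf2p0
  have hFeq : ∀ nm : ℕ × ℕ, F nm =
      (f nm.1 ^ 2 * p nm.1) * p nm.2 - 2 * ((f nm.1 * p nm.1) * (f nm.2 * p nm.2))
        + p nm.1 * (f nm.2 ^ 2 * p nm.2) := by
    intro nm; rw [hF]; ring
  have hFS : Summable F := by
    rw [show F = fun nm => (f nm.1 ^ 2 * p nm.1) * p nm.2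
        - 2 * ((f nm.1 * p nm.1) * (f nm.2 * p nm.2)) + p nm.1 * (f nm.2 ^ 2 * p nm.2)
      from funext hFeq]
    exact (h1.sub (h2.mul_left 2)).add h3
  have htsumF : ∑' nm, F nm = 2 * pvar r f := by
    calc ∑' nm, F nm
        = ∑' nm : ℕ × ℕ, ((f nm.1 ^ 2 * p nm.1) * p nm.2
            - 2 * ((f nm.1 * p nm.1) * (f nm.2 * p nm.2)) + p nm.1 * (f nm.2 ^ 2 * p nm.2)) := by
          exact tsum_congr hFeq
      _ = (∑' nm : ℕ × ℕ, ((f nm.1 ^ 2 * p nm.1) * p nm.2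
            - 2 * ((f nm.1 * p nm.1) * (f nm.2 * p nm.2))))
          + ∑' nm : ℕ × ℕ, p nm.1 * (f nm.2 ^ 2 * p nm.2) := Summable.tsum_add (h1.sub (h2.mul_left 2)) h3
      _ = (∑' nm : ℕ × ℕ, (f nm.1 ^ 2 * p nm.1) * p nm.2)
          - 2 * (∑' nm : ℕ × ℕ, (f nm.1 * p nm.1) * (f nm.2 * p nm.2))
          + ∑' nm : ℕ × ℕ, p nm.1 * (f nm.2 ^ 2 * p nm.2) := by
          rw [Summable.tsum_sub h1 (h2.mul_left 2), tsum_mul_left]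
      _ = 2 * pvar r f := by
          rw [← Summable.tsum_mul_tsum hSf2 (p_summable r) h1,
              ← Summable.tsum_mul_tsum hSf hSf h2,
              ← Summable.tsum_mul_tsum (p_summable r) hSf2 h3,
              p_tsum r]
          simp only [pvar, pev]
          ring
  have hF0 : ∀ nm, 0 ≤ F nm := fun nm =>
    mul_nonneg (mul_nonneg (p_nonneg r _) (p_nonneg r _)) (sq_nonneg _)
  have hGS : Summable G := by
    apply hFS.of_nonneg_of_le (fun nm => ?_) (fun nm => ?_)
    · rw [hG]; dsimp only; split
      · exact hF0 nm
      · exact le_refl 0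
    · rw [hG]; dsimp only; split
      · exact le_refl _
      · exact hF0 nm
  have hswap : ∀ nm : ℕ × ℕ, F nm = G nm + G nm.swap := by
    intro ⟨n, m⟩
    rw [hG, hF]
    dsimp only [Prod.swap, Prod.fst, Prod.snd]
    rcases lt_trichotomy m n with h | h | h
    · rw [if_pos h, if_neg (by omega)]; ring
    · subst h; simp
    · rw [if_neg (by omega), if_pos h]; ring
  have hGswapS : Summable (fun nm : ℕ × ℕ => G nm.swap) :=
    (Equiv.prodComm ℕ ℕ).summable_iff.mpr hGS |>.congr (fun nm => rfl)
  have : ∑' nm, F nm = ∑' nm, G nm + ∑' nm : ℕ × ℕ, G nm.swap := by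
    rw [← Summable.tsum_add hGS hGswapS]
    exact tsum_congr hswap
  have hGswapT : ∑' nm : ℕ × ℕ, G nm.swap = ∑' nm, G nm :=
    (Equiv.prodComm ℕ ℕ).tsum_eq G
  rw [hGswapT] at this
  rw [htsumF] at this
  linarith [this]


end Main

lemma r_tail (r : ℝ≥0) : (r:ℝ) * ∑' k, (if 3 ≤ k then poissonPMFReal r k else 0)
    = ∑' x : ℕ, (if 4 ≤ x then (x:ℝ) * poissonPMFReal r x else 0) := by
  classical
  set h : ℕ → ℝ := fun x => if 4 ≤ x then (x:ℝ) * poissonPMFReal r x else 0 with hh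
  have hS : Summable h := by
    rw [hh]; exact summable_ite_np r _
  have step1 : (r:ℝ) * ∑' k, (if 3 ≤ k then poissonPMFReal r k else 0)
      = ∑' k, h (k+1) := by
    rw [← tsum_mul_left]
    apply tsum_congr
    intro k
    rw [hh]; dsimp only
    by_cases hk : 3 ≤ k
    · rw [if_pos hk, if_pos (by omega : 4 ≤ k + 1), p_shift r k]
      push_cast; ring
    · rw [if_neg hk, if_neg (by omega : ¬ 4 ≤ k + 1)]
      ring
  rw [step1, Summable.tsum_eq_zero_add hS]
  have h0 : h 0 = 0 := by rw [hh]; norm_num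
  rw [h0]; ring

theorem stmt_12 :
    ∃ C : ℝ, 0 < C ∧ ∀ (r : ℝ≥0) (a b : ℝ), 2 ≤ a → a ≤ b →
      pvar r (fab a b) ≤ C * (a * b) * pev r (fab a b) := by
  classical
  refine ⟨8, by norm_num, ?_⟩
  intro r a b h2a hab
  have hb2' : (2:ℝ) ≤ b := by linarith
  have hab0 : (0:ℝ) ≤ a * b := by nlinarith
  have hs0 : (0:ℝ) ≤ Real.sqrt (a*b) := Real.sqrt_nonneg _
  set f : ℕ → ℝ := fab a b with hfdef
  set M : ℝ := 4 * Real.sqrt (a*b) with hMdef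
  set A : ℝ := Real.sqrt (a*b) with hAdef
  have hmono : Monotone f := fab_mono h2a hab
  have h03 : ∀ x, x ≤ 3 → f x = 0 := fun x hx => fab_zero hx
  have hdd : ∀ k, f (k+1) - f k ≤ M := by
    intro k
    have := fab_succ_le h2a hab k
    rw [hfdef, hMdef]
    linarith
  have hAb : ∀ n, |f n| ≤ A * (n:ℝ) := by
    intro n
    rw [hfdef, hAdef, abs_of_nonneg (fab_nonneg n)]
    exact fab_le h2a hab n
  have hf0 : ∀ n, 0 ≤ f n := fun n => fab_nonneg n
  have hM2 : M^2 = 16 * (a*b) := by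
    rw [hMdef, mul_pow, Real.sq_sqrt hab0]
    norm_num
  have hrep := var_rep r f A hf0 hAb
  have hstep := step3 r f M A hmono h03 hdd hAb
  have htail := r_tail r
  -- lower bound on pev
  have hSf : Summable (fun n => f n * poissonPMFReal r n) :=
    summable_aux r A 1 f (by simpa using hAb)
  have hpev : ∑' x : ℕ, (if 4 ≤ x then (x:ℝ) * poissonPMFReal r x else 0)
      ≤ (1/2) * pev r f := by
    rw [pev, ← tsum_mul_left]
    apply Summable.tsum_le_tsum _ (summable_ite_np r _) (hSf.mul_left _)
    intro x
    by_cases hx : 4 ≤ x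
    · rw [if_pos hx]
      have h2x : 2 * (x:ℝ) ≤ f x := fab_ge h2a hab hx
      have hp0 : 0 ≤ poissonPMFReal r x := p_nonneg r x
      nlinarith
    · rw [if_neg hx]
      have := mul_nonneg (hf0 x) (p_nonneg r x)
      linarith
  have hnn16 : (0:ℝ) ≤ 16 * (a*b) := by linarith
  calc pvar r f ≤ M^2 * ((r:ℝ) * ∑' k, (if 3 ≤ k then poissonPMFReal r k else 0)) := by
        rw [hrep]; exact hstep
    _ = 16 * (a*b) * ∑' x : ℕ, (if 4 ≤ x then (x:ℝ) * poissonPMFReal r x else 0) := by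
        rw [hM2, htail]
    _ ≤ 16 * (a*b) * ((1/2) * pev r f) := by
        exact mul_le_mul_of_nonneg_left hpev hnn16
    _ = 8 * (a * b) * pev r f := by ring
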